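/- arXiv:2204.08214 — 4 statements merged into one kernel-verified Lean document; each statement's English description precedes it below -/
import Mathlib

section
/- Let N_p ∈ ℕ, let ω_s > 0 for s = 1,…,N_p, and let B₀ : ℝ³ → ℝ³ be continuously differentiable with ∇·B₀(x) = 0 for all x ∈ ℝ³. Then the discrete particle bracket satisfies the Jacobi identity: for all smooth functions F, G, H : (ℝ³)^{N_p} × (ℝ³)^{N_p} → ℝ and all (X,V), {{F,G},H}(X,V) + {{G,H},F}(X,V) + {{H,F},G}(X,V) = 0. -/
open Matrix
open scoped Matrix BigOperators

set_option linter.unusedSectionVars false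
set_option linter.unusedVariables false
set_option maxHeartbeats 1000000

noncomputable section

/-- Phase space of `Np` particles in 3D: positions and velocities. -/
abbrev Phase (Np : ℕ) := (Fin Np → Fin 3 → ℝ) × (Fin Np → Fin 3 → ℝ)

/-- Gradient of `F` with respect to the position `X s` of the `s`-th particle. -/
def gradX {Np : ℕ} (F : Phase Np → ℝ) (Z : Phase Np) (s : Fin Np) : Fin 3 → ℝ :=
  fun i => fderiv ℝ F Z (Pi.single s (Pi.single i 1), 0)

/-- Gradient of `F` with respect to the velocity `V s` of the `s`-th particle. -/
def gradV {Np : ℕ} (F : Phase Np → ℝ) (Z : Phase Np) (s : Fin Np) : Fin 3 → ℝ :=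
  fun i => fderiv ℝ F Z (0, Pi.single s (Pi.single i 1))

/-- The discrete particle bracket with weights `ω` and magnetic field `B0`. -/
def pBracket {Np : ℕ} (ω : Fin Np → ℝ) (B0 : (Fin 3 → ℝ) → Fin 3 → ℝ)
    (F G : Phase Np → ℝ) (Z : Phase Np) : ℝ :=
  (∑ s, (1 / ω s) * (gradX F Z s ⬝ᵥ gradV G Z s - gradX G Z s ⬝ᵥ gradV F Z s)) +
    ∑ s, (1 / ω s) * (B0 (Z.1 s) ⬝ᵥ (gradV F Z s ⨯₃ gradV G Z s))

/-- Divergence of a vector field on ℝ³. -/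
def div3 (B : (Fin 3 → ℝ) → Fin 3 → ℝ) (x : Fin 3 → ℝ) : ℝ :=
  ∑ i, fderiv ℝ (fun y => B y i) x (Pi.single i 1)

section GeneralJacobi
variable {E : Type*} [NormedAddCommGroup E] [NormedSpace ℝ E]
variable {ι : Type*} [Fintype ι]

lemma aux_fderiv_apply_contDiff (F : E → ℝ) (hF : ContDiff ℝ (⊤ : ℕ∞) F) (v : E) :
    ContDiff ℝ (⊤ : ℕ∞) (fun z => fderiv ℝ F z v) :=
  (hF.fderiv_right (by simp)).clm_apply contDiff_const

lemma aux_symm (F : E → ℝ) (hF : ContDiff ℝ (⊤ : ℕ∞) F) (Z u v : E) :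
    fderiv ℝ (fun z => fderiv ℝ F z u) Z v = fderiv ℝ (fun z => fderiv ℝ F z v) Z u := by
  have hd : DifferentiableAt ℝ (fderiv ℝ F) Z :=
    ((hF.fderiv_right (m := (⊤ : ℕ∞)) (by simp)).differentiable (by simp)) Z
  have h1 : ∀ w : E, fderiv ℝ (fun z => fderiv ℝ F z w) Z
      = (fderiv ℝ (fderiv ℝ F) Z).flip w := by
    intro w
    have := fderiv_clm_apply (𝕜 := ℝ) (c := fderiv ℝ F) (u := fun _ => w) hd
      (differentiableAt_const w)
    simp [fderiv_const] at this
    simpa using this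
  have hsymm : IsSymmSndFDerivAt ℝ F Z := (hF.contDiffAt).isSymmSndFDerivAt (by rw [minSmoothness_of_isRCLikeNormedField]; exact WithTop.coe_le_coe.mpr (le_top : (2 : ℕ∞) ≤ ⊤))
  rw [h1 u, h1 v]
  simpa using (hsymm v u)

lemma fderiv_sum_apply' (s : Finset ι) (f : ι → E → ℝ) (Z v : E)
    (hf : ∀ i ∈ s, DifferentiableAt ℝ (f i) Z) :
    fderiv ℝ (fun z => ∑ i ∈ s, f i z) Z v = ∑ i ∈ s, fderiv ℝ (f i) Z v := by
  rw [fderiv_fun_sum hf]; simp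

lemma fderiv_mul3_apply {f g h : E → ℝ} {Z : E} (v : E) (hf : DifferentiableAt ℝ f Z)
    (hg : DifferentiableAt ℝ g Z) (hh : DifferentiableAt ℝ h Z) :
    fderiv ℝ (fun z => f z * g z * h z) Z v =
      fderiv ℝ f Z v * g Z * h Z + f Z * fderiv ℝ g Z v * h Z
        + f Z * g Z * fderiv ℝ h Z v := by
  rw [fderiv_fun_mul (hf.fun_mul hg) hh]
  simp only [ContinuousLinearMap.add_apply, ContinuousLinearMap.smul_apply, smul_eq_mul]
  rw [fderiv_fun_mul hf hg]
  simp only [ContinuousLinearMap.add_apply, ContinuousLinearMap.smul_apply, smul_eq_mul]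
  ring

def br (P : E → ι → ι → ℝ) (e : ι → E) (F G : E → ℝ) (z : E) : ℝ :=
  ∑ a, ∑ b, P z a b * fderiv ℝ F z (e a) * fderiv ℝ G z (e b)

lemma fderiv_br (P : E → ι → ι → ℝ) (e : ι → E) (F G : E → ℝ)
    (hF : ContDiff ℝ (⊤ : ℕ∞) F) (hG : ContDiff ℝ (⊤ : ℕ∞) G) (Z v : E)
    (hP : ∀ a b, DifferentiableAt ℝ (fun z => P z a b) Z) :
    fderiv ℝ (br P e F G) Z v = ∑ a, ∑ b,
      (fderiv ℝ (fun z => P z a b) Z v * fderiv ℝ F Z (e a) * fderiv ℝ G Z (e b)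
       + P Z a b * fderiv ℝ (fun z => fderiv ℝ F z (e a)) Z v * fderiv ℝ G Z (e b)
       + P Z a b * fderiv ℝ F Z (e a) * fderiv ℝ (fun z => fderiv ℝ G z (e b)) Z v) := by
  have hFa : ∀ a : ι, DifferentiableAt ℝ (fun z => fderiv ℝ F z (e a)) Z := fun a =>
    ((aux_fderiv_apply_contDiff F hF (e a)).differentiable (by simp)) Z
  have hGb : ∀ b : ι, DifferentiableAt ℝ (fun z => fderiv ℝ G z (e b)) Z := fun b =>
    ((aux_fderiv_apply_contDiff G hG (e b)).differentiable (by simp)) Z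
  have h1 : ∀ a b : ι, DifferentiableAt ℝ
      (fun z => P z a b * fderiv ℝ F z (e a) * fderiv ℝ G z (e b)) Z := fun a b =>
    ((hP a b).mul (hFa a)).mul (hGb b)
  unfold br
  rw [fderiv_sum_apply' _ _ _ _ (fun a _ => DifferentiableAt.fun_sum (fun b _ => h1 a b))]
  refine Finset.sum_congr rfl fun a _ => ?_
  rw [fderiv_sum_apply' _ _ _ _ (fun b _ => h1 a b)]
  exact Finset.sum_congr rfl fun b _ => fderiv_mul3_apply v (hP a b) (hFa a) (hGb b)

def quadEquiv (ι : Type*) : (ι × ι × ι × ι) ≃ (ι × ι × ι × ι) where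
  toFun p := (p.2.2.1, p.2.2.2, p.2.1, p.1)
  invFun q := (q.2.2.2, q.2.2.1, q.1, q.2.1)
  left_inv p := rfl
  right_inv q := rfl

def triEquiv2 (ι : Type*) : (ι × ι × ι × ι) ≃ (ι × ι × ι × ι) where
  toFun p := (p.1, p.2.2.1, p.2.2.2, p.2.1)
  invFun q := (q.1, q.2.2.2, q.2.1, q.2.2.1)
  left_inv p := rfl
  right_inv q := rfl

def triEquiv3 (ι : Type*) : (ι × ι × ι × ι) ≃ (ι × ι × ι × ι) where
  toFun p := (p.1, p.2.2.2, p.2.1, p.2.2.1)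
  invFun q := (q.1, q.2.2.1, q.2.2.2, q.2.1)
  left_inv p := rfl
  right_inv q := rfl

lemma sum_rot (f : ι → ι → ι → ι → ℝ) :
    ∑ c, ∑ d, ∑ a, ∑ b, f c d a b = ∑ d, ∑ a, ∑ b, ∑ c, f c d a b := by
  rw [Finset.sum_comm]
  refine Finset.sum_congr rfl fun d _ => ?_
  rw [Finset.sum_comm]
  refine Finset.sum_congr rfl fun a _ => ?_
  rw [Finset.sum_comm]

lemma cancel2 (P S : ι → ι → ℝ) (u w : ι → ℝ)
    (hP : ∀ a b, P a b = -P b a) (hS : ∀ a c, S a c = S c a) :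
    (∑ c, ∑ d, ∑ a, ∑ b, P c d * P a b * S a c * u b * w d)
    + (∑ c, ∑ d, ∑ a, ∑ b, P c d * P a b * w a * S b c * u d) = 0 := by
  have e1 : (∑ c, ∑ d, ∑ a, ∑ b, P c d * P a b * S a c * u b * w d)
      = ∑ p : ι × ι × ι × ι,
        P p.1 p.2.1 * P p.2.2.1 p.2.2.2 * S p.2.2.1 p.1 * u p.2.2.2 * w p.2.1 := by
    simp [Fintype.sum_prod_type]
  have e2 : (∑ c, ∑ d, ∑ a, ∑ b, P c d * P a b * w a * S b c * u d)
      = ∑ p : ι × ι × ι × ι,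
        P p.1 p.2.1 * P p.2.2.1 p.2.2.2 * w p.2.2.1 * S p.2.2.2 p.1 * u p.2.1 := by
    simp [Fintype.sum_prod_type]
  rw [e1, e2]
  rw [Fintype.sum_equiv (quadEquiv ι)
    (fun p => P p.1 p.2.1 * P p.2.2.1 p.2.2.2 * S p.2.2.1 p.1 * u p.2.2.2 * w p.2.1)
    (fun p => -(P p.1 p.2.1 * P p.2.2.1 p.2.2.2 * w p.2.2.1 * S p.2.2.2 p.1 * u p.2.1))
    (fun p => ?_)]
  · rw [← Finset.sum_add_distrib]; simp
  · obtain ⟨c, d, a, b⟩ := p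
    simp only [quadEquiv, Equiv.coe_fn_mk]
    rw [hP d c, hS c a]
    ring

lemma cancel3 (P : ι → ι → ℝ) (dP : ι → ι → ι → ℝ) (u v w : ι → ℝ)
    (hcyc : ∀ a b d, ∑ c, (P c d * dP a b c + P c a * dP b d c + P c b * dP d a c) = 0) :
    (∑ c, ∑ d, ∑ a, ∑ b, P c d * dP a b c * u a * v b * w d)
    + (∑ c, ∑ d, ∑ a, ∑ b, P c d * dP a b c * v a * w b * u d)
    + (∑ c, ∑ d, ∑ a, ∑ b, P c d * dP a b c * w a * u b * v d) = 0 := by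
  have e2 : (∑ c, ∑ d, ∑ a, ∑ b, P c d * dP a b c * v a * w b * u d)
      = ∑ c, ∑ d, ∑ a, ∑ b, P c a * dP b d c * u a * v b * w d := by
    have h1 : (∑ c, ∑ d, ∑ a, ∑ b, P c d * dP a b c * v a * w b * u d)
        = ∑ p : ι × ι × ι × ι,
          P p.1 p.2.1 * dP p.2.2.1 p.2.2.2 p.1 * v p.2.2.1 * w p.2.2.2 * u p.2.1 := by
      simp [Fintype.sum_prod_type]
    have h2 : (∑ c, ∑ d, ∑ a, ∑ b, P c a * dP b d c * u a * v b * w d)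
        = ∑ p : ι × ι × ι × ι,
          P p.1 p.2.2.1 * dP p.2.2.2 p.2.1 p.1 * u p.2.2.1 * v p.2.2.2 * w p.2.1 := by
      simp [Fintype.sum_prod_type]
    rw [h1, h2]
    refine (Fintype.sum_equiv (triEquiv2 ι) _ _ fun p => ?_).symm
    obtain ⟨c, d, a, b⟩ := p
    simp only [triEquiv2, Equiv.coe_fn_mk]
    ring
  have e3 : (∑ c, ∑ d, ∑ a, ∑ b, P c d * dP a b c * w a * u b * v d)
      = ∑ c, ∑ d, ∑ a, ∑ b, P c b * dP d a c * u a * v b * w d := by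
    have h1 : (∑ c, ∑ d, ∑ a, ∑ b, P c d * dP a b c * w a * u b * v d)
        = ∑ p : ι × ι × ι × ι,
          P p.1 p.2.1 * dP p.2.2.1 p.2.2.2 p.1 * w p.2.2.1 * u p.2.2.2 * v p.2.1 := by
      simp [Fintype.sum_prod_type]
    have h2 : (∑ c, ∑ d, ∑ a, ∑ b, P c b * dP d a c * u a * v b * w d)
        = ∑ p : ι × ι × ι × ι,
          P p.1 p.2.2.2 * dP p.2.1 p.2.2.1 p.1 * u p.2.2.1 * v p.2.2.2 * w p.2.1 := by
      simp [Fintype.sum_prod_type]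
    rw [h1, h2]
    refine (Fintype.sum_equiv (triEquiv3 ι) _ _ fun p => ?_).symm
    obtain ⟨c, d, a, b⟩ := p
    simp only [triEquiv3, Equiv.coe_fn_mk]
    ring
  rw [e2, e3]
  simp only [← Finset.sum_add_distrib]
  have key : ∀ c d a b : ι, P c d * dP a b c * u a * v b * w d
      + P c a * dP b d c * u a * v b * w d
      + P c b * dP d a c * u a * v b * w d
      = (P c d * dP a b c + P c a * dP b d c + P c b * dP d a c) * (u a * v b * w d) := by
    intros; ring
  simp only [key]
  rw [sum_rot]
  refine Finset.sum_eq_zero fun d _ => Finset.sum_eq_zero fun a _ =>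
    Finset.sum_eq_zero fun b _ => ?_
  rw [← Finset.sum_mul, hcyc a b d, zero_mul]

/-- General Jacobi identity for a bracket defined by an antisymmetric tensor. -/
lemma jacobi_general (P : E → ι → ι → ℝ) (e : ι → E) (Z : E)
    (hP : ∀ a b, DifferentiableAt ℝ (fun z => P z a b) Z)
    (hanti : ∀ a b, P Z a b = -P Z b a)
    (hcyc : ∀ a b d, ∑ c, (P Z c d * fderiv ℝ (fun z => P z a b) Z (e c)
        + P Z c a * fderiv ℝ (fun z => P z b d) Z (e c)
        + P Z c b * fderiv ℝ (fun z => P z d a) Z (e c)) = 0)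
    (F G H : E → ℝ) (hF : ContDiff ℝ (⊤ : ℕ∞) F) (hG : ContDiff ℝ (⊤ : ℕ∞) G) (hH : ContDiff ℝ (⊤ : ℕ∞) H) :
    br P e (br P e F G) H Z + br P e (br P e G H) F Z + br P e (br P e H F) G Z = 0 := by
  set DF := fun a : ι => fderiv ℝ F Z (e a) with hDF
  set DG := fun a : ι => fderiv ℝ G Z (e a) with hDG
  set DH := fun a : ι => fderiv ℝ H Z (e a) with hDH
  set SF := fun (a c : ι) => fderiv ℝ (fun z => fderiv ℝ F z (e a)) Z (e c) with hSF
  set SG := fun (a c : ι) => fderiv ℝ (fun z => fderiv ℝ G z (e a)) Z (e c) with hSG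
  set SH := fun (a c : ι) => fderiv ℝ (fun z => fderiv ℝ H z (e a)) Z (e c) with hSH
  set dP := fun (a b c : ι) => fderiv ℝ (fun z => P z a b) Z (e c) with hdP
  have expand : ∀ (A B : E → ℝ), ContDiff ℝ (⊤ : ℕ∞) A → ContDiff ℝ (⊤ : ℕ∞) B →
      ∀ (C : E → ℝ), br P e (br P e A B) C Z = ∑ c, ∑ d, P Z c d *
        (∑ a, ∑ b, (dP a b c * fderiv ℝ A Z (e a) * fderiv ℝ B Z (e b)
          + P Z a b * fderiv ℝ (fun z => fderiv ℝ A z (e a)) Z (e c) * fderiv ℝ B Z (e b)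
          + P Z a b * fderiv ℝ A Z (e a) * fderiv ℝ (fun z => fderiv ℝ B z (e b)) Z (e c)))
        * fderiv ℝ C Z (e d) := by
    intro A B hA hB C
    have hrfl : br P e (br P e A B) C Z = ∑ c, ∑ d,
        P Z c d * fderiv ℝ (br P e A B) Z (e c) * fderiv ℝ C Z (e d) := rfl
    rw [hrfl]
    refine Finset.sum_congr rfl fun c _ => Finset.sum_congr rfl fun d _ => ?_
    rw [fderiv_br P e A B hA hB Z (e c) hP]
  rw [expand F G hF hG H, expand G H hG hH F, expand H F hH hF G]
  -- distribute
  have distrib : ∀ (A B C : ι → ℝ) (SA SB : ι → ι → ℝ),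
      (∑ c, ∑ d, P Z c d * (∑ a, ∑ b, (dP a b c * A a * B b
          + P Z a b * SA a c * B b + P Z a b * A a * SB b c)) * C d)
      = (∑ c, ∑ d, ∑ a, ∑ b, P Z c d * dP a b c * A a * B b * C d)
        + ((∑ c, ∑ d, ∑ a, ∑ b, P Z c d * P Z a b * SA a c * B b * C d)
        + (∑ c, ∑ d, ∑ a, ∑ b, P Z c d * P Z a b * A a * SB b c * C d)) := by
    intro A B C SA SB
    simp only [← Finset.sum_add_distrib]
    refine Finset.sum_congr rfl fun c _ => Finset.sum_congr rfl fun d _ => ?_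
    simp only [Finset.mul_sum, Finset.sum_mul, ← Finset.sum_add_distrib]
    refine Finset.sum_congr rfl fun a _ => Finset.sum_congr rfl fun b _ => ?_
    ring
  rw [distrib DF DG DH SF SG, distrib DG DH DF SG SH, distrib DH DF DG SH SF]
  have hcyc' : ∀ a b d, ∑ c, (P Z c d * dP a b c + P Z c a * dP b d c
      + P Z c b * dP d a c) = 0 := hcyc
  have c3 := cancel3 (fun a b => P Z a b) dP DF DG DH hcyc'
  have symF : ∀ a c, SF a c = SF c a := fun a c => aux_symm F hF Z (e a) (e c)
  have symG : ∀ a c, SG a c = SG c a := fun a c => aux_symm G hG Z (e a) (e c)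
  have symH : ∀ a c, SH a c = SH c a := fun a c => aux_symm H hH Z (e a) (e c)
  have cF := cancel2 (fun a b => P Z a b) SF DG DH hanti symF
  have cG := cancel2 (fun a b => P Z a b) SG DH DF hanti symG
  have cH := cancel2 (fun a b => P Z a b) SH DF DG hanti symH
  -- now pure algebra: group terms
  linarith [c3, cF, cG, cH]

end GeneralJacobi

abbrev Idx (Np : ℕ) := (Fin Np × Fin 3) ⊕ (Fin Np × Fin 3)

def bas (Np : ℕ) : Idx Np → Phase Np
  | .inl p => (Pi.single p.1 (Pi.single p.2 1), 0)
  | .inr p => (0, Pi.single p.1 (Pi.single p.2 1))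

variable {Np : ℕ}

def Pten (ω : Fin Np → ℝ) (B0 : (Fin 3 → ℝ) → Fin 3 → ℝ) (z : Phase Np) :
    Idx Np → Idx Np → ℝ
  | .inl _, .inl _ => 0
  | .inl p, .inr q => if p = q then 1 / ω p.1 else 0
  | .inr p, .inl q => -(if q = p then 1 / ω q.1 else 0)
  | .inr p, .inr q => if p.1 = q.1 then
      (1 / ω p.1) * (B0 (z.1 p.1) ⬝ᵥ ((Pi.single p.2 (1:ℝ)) ⨯₃ (Pi.single q.2 1))) else 0

lemma triple_expand (c u v : Fin 3 → ℝ) :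
    c ⬝ᵥ (u ⨯₃ v) = ∑ i, ∑ j, u i * v j *
      (c ⬝ᵥ ((Pi.single i (1:ℝ)) ⨯₃ (Pi.single j 1))) := by
  simp [cross_apply, dotProduct, Fin.sum_univ_three, Pi.single_apply]
  ring

lemma sum_ite_const {α : Type*} [Fintype α] (c : Prop) [Decidable c] (f : α → ℝ) :
    (∑ j : α, if c then f j else 0) = if c then ∑ j, f j else 0 := by split <;> simp

lemma br_eq (ω : Fin Np → ℝ) (B0 : (Fin 3 → ℝ) → Fin 3 → ℝ) (F G : Phase Np → ℝ)
    (z : Phase Np) : br (Pten ω B0) (bas Np) F G z = pBracket ω B0 F G z := by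
  have e1 : ∀ p : Fin Np × Fin 3, fderiv ℝ F z (bas Np (.inl p)) = gradX F z p.1 p.2 :=
    fun p => rfl
  have e2 : ∀ p : Fin Np × Fin 3, fderiv ℝ G z (bas Np (.inr p)) = gradV G z p.1 p.2 :=
    fun p => rfl
  unfold br pBracket
  simp only [Fintype.sum_sum_type]
  have LL : ∑ p : Fin Np × Fin 3, ∑ q : Fin Np × Fin 3,
      Pten ω B0 z (.inl p) (.inl q) * fderiv ℝ F z (bas Np (.inl p))
        * fderiv ℝ G z (bas Np (.inl q)) = 0 := by
    simp [Pten]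
  have LR : ∑ p : Fin Np × Fin 3, ∑ q : Fin Np × Fin 3,
      Pten ω B0 z (.inl p) (.inr q) * fderiv ℝ F z (bas Np (.inl p))
        * fderiv ℝ G z (bas Np (.inr q))
      = ∑ s, (1 / ω s) * (gradX F z s ⬝ᵥ gradV G z s) := by
    simp only [Pten, ite_mul, zero_mul, Finset.sum_ite_eq, Finset.mem_univ, if_true]
    rw [Fintype.sum_prod_type]
    simp only [dotProduct, Finset.mul_sum, gradX, gradV, bas]
    exact Finset.sum_congr rfl fun s _ => Finset.sum_congr rfl fun i _ => by ring
  have RL : ∑ p : Fin Np × Fin 3, ∑ q : Fin Np × Fin 3,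
      Pten ω B0 z (.inr p) (.inl q) * fderiv ℝ F z (bas Np (.inr p))
        * fderiv ℝ G z (bas Np (.inl q))
      = -∑ s, (1 / ω s) * (gradX G z s ⬝ᵥ gradV F z s) := by
    simp only [Pten, neg_mul, ite_mul, zero_mul, neg_zero, Finset.sum_neg_distrib, neg_inj]
    simp only [Finset.sum_ite_eq', Finset.mem_univ, if_true]
    rw [Fintype.sum_prod_type]
    simp only [dotProduct, Finset.mul_sum, gradX, gradV, bas]
    refine Finset.sum_congr rfl fun s _ => Finset.sum_congr rfl fun i _ => ?_
    ring
  have RR : ∑ p : Fin Np × Fin 3, ∑ q : Fin Np × Fin 3,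
      Pten ω B0 z (.inr p) (.inr q) * fderiv ℝ F z (bas Np (.inr p))
        * fderiv ℝ G z (bas Np (.inr q))
      = ∑ s, (1 / ω s) * (B0 (z.1 s) ⬝ᵥ (gradV F z s ⨯₃ gradV G z s)) := by
    simp only [Pten, ite_mul, zero_mul, Fintype.sum_prod_type]
    simp only [sum_ite_const, Finset.sum_ite_eq, Finset.mem_univ, if_true]
    refine Finset.sum_congr rfl fun s _ => ?_
    rw [triple_expand]
    simp only [Finset.mul_sum]
    refine Finset.sum_congr rfl fun i _ => Finset.sum_congr rfl fun j _ => ?_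
    have hf : fderiv ℝ F z (bas Np (.inr (s, i))) = gradV F z s i := rfl
    have hg : fderiv ℝ G z (bas Np (.inr (s, j))) = gradV G z s j := rfl
    rw [hf, hg]
    ring
  simp only [Finset.sum_add_distrib]
  rw [LL, LR, RL, RR]
  simp only [mul_sub, Finset.sum_sub_distrib]
  ring

section CPart
variable (ω : Fin Np → ℝ) (B0 : (Fin 3 → ℝ) → Fin 3 → ℝ)

def projL (s : Fin Np) : Phase Np →L[ℝ] (Fin 3 → ℝ) :=
  (ContinuousLinearMap.proj s).comp (ContinuousLinearMap.fst ℝ _ _)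

lemma fderiv_Bcomp (hB : ContDiff ℝ 1 B0) (Z : Phase Np) (s : Fin Np) (m : Fin 3)
    (v : Phase Np) :
    fderiv ℝ (fun z : Phase Np => B0 (z.1 s) m) Z v
      = fderiv ℝ (fun y => B0 y m) (Z.1 s) (v.1 s) := by
  have hgm : DifferentiableAt ℝ (fun y => B0 y m) (Z.1 s) :=
    (differentiable_pi.mp (hB.differentiable one_ne_zero) m) (Z.1 s)
  have hL : (fun z : Phase Np => B0 (z.1 s) m)
      = (fun y => B0 y m) ∘ (projL (Np := Np) s) := rfl
  rw [hL, fderiv_comp Z hgm ((projL (Np := Np) s).differentiableAt),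
    ContinuousLinearMap.fderiv]
  rfl

lemma diff_Bdot (hB : ContDiff ℝ 1 B0) (Z : Phase Np) (s : Fin Np) (c : Fin 3 → ℝ) :
    DifferentiableAt ℝ (fun z : Phase Np => B0 (z.1 s) ⬝ᵥ c) Z := by
  simp only [dotProduct]
  refine DifferentiableAt.fun_sum fun m _ => DifferentiableAt.mul_const ?_ _
  have hgm : Differentiable ℝ (fun y => B0 y m) :=
    differentiable_pi.mp (hB.differentiable one_ne_zero) m
  have hL : (fun z : Phase Np => B0 (z.1 s) m)
      = (fun y => B0 y m) ∘ (projL (Np := Np) s) := rfl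
  rw [hL]
  exact (hgm _).comp Z ((projL (Np := Np) s).differentiableAt)

lemma Pten_diff (hB : ContDiff ℝ 1 B0) (Z : Phase Np) (a b : Idx Np) :
    DifferentiableAt ℝ (fun z => Pten ω B0 z a b) Z := by
  rcases a with p | p <;> rcases b with q | q
  · exact differentiableAt_const _
  · exact differentiableAt_const _
  · exact differentiableAt_const _
  · simp only [Pten]
    split
    · exact (diff_Bdot B0 hB Z p.1 _).const_mul _
    · exact differentiableAt_const _

lemma Pten_anti (Z : Phase Np) (a b : Idx Np) :
    Pten ω B0 Z a b = -Pten ω B0 Z b a := by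
  rcases a with p | p <;> rcases b with q | q
  · simp [Pten]
  · simp [Pten]
  · simp [Pten]
  · simp only [Pten]
    rcases eq_or_ne p.1 q.1 with h | h
    · rw [if_pos h, if_pos h.symm, h]
      rw [show (Pi.single q.2 (1:ℝ)) ⨯₃ (Pi.single p.2 1)
          = -((Pi.single p.2 (1:ℝ)) ⨯₃ (Pi.single q.2 1)) from (cross_anticomm _ _).symm]
      rw [dotProduct_neg]
      ring
    · rw [if_neg h, if_neg (Ne.symm h), neg_zero]

lemma Pten_fderiv_rr (hB : ContDiff ℝ 1 B0) (Z : Phase Np) (p q : Fin Np × Fin 3)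
    (v : Phase Np) :
    fderiv ℝ (fun z => Pten ω B0 z (.inr p) (.inr q)) Z v
    = if p.1 = q.1 then (1 / ω p.1) * ∑ m, fderiv ℝ (fun y => B0 y m) (Z.1 p.1) (v.1 p.1)
        * ((Pi.single p.2 (1:ℝ)) ⨯₃ (Pi.single q.2 1)) m else 0 := by
  simp only [Pten]
  split
  · rw [fderiv_const_mul (diff_Bdot B0 hB Z p.1 _)]
    simp only [ContinuousLinearMap.smul_apply, smul_eq_mul]
    congr 1
    have : (fun z : Phase Np => B0 (z.1 p.1) ⬝ᵥ ((Pi.single p.2 (1:ℝ)) ⨯₃ (Pi.single q.2 1)))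
        = fun z => ∑ m, B0 (z.1 p.1) m * ((Pi.single p.2 (1:ℝ)) ⨯₃ (Pi.single q.2 1)) m := by
      funext z; simp [dotProduct]
    rw [this]
    have hdm : ∀ m : Fin 3, Differentiable ℝ (fun z : Phase Np => B0 (z.1 p.1) m) := by
      intro m
      have hgm : Differentiable ℝ (fun y => B0 y m) :=
        differentiable_pi.mp (hB.differentiable one_ne_zero) m
      exact hgm.comp ((projL (Np := Np) p.1).differentiable)
    rw [fderiv_sum_apply' Finset.univ _ Z v (fun m _ => ((hdm m) Z).mul_const _)]
    refine Finset.sum_congr rfl fun m _ => ?_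
    rw [fderiv_mul_const ((hdm m) Z)]
    simp only [ContinuousLinearMap.smul_apply, smul_eq_mul]
    rw [fderiv_Bcomp B0 hB]
    ring
  · simp

lemma eps_identity (M : Fin 3 → Fin 3 → ℝ) (hM : M 0 0 + M 1 1 + M 2 2 = 0) (i j l : Fin 3) :
    (∑ m, M l m * ((Pi.single i (1:ℝ)) ⨯₃ (Pi.single j 1)) m)
    + (∑ m, M i m * ((Pi.single j (1:ℝ)) ⨯₃ (Pi.single l 1)) m)
    + (∑ m, M j m * ((Pi.single l (1:ℝ)) ⨯₃ (Pi.single i 1)) m) = 0 := by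
  fin_cases i <;> fin_cases j <;> fin_cases l <;>
    simp [cross_apply, Fin.sum_univ_three, Pi.single_apply] <;> linarith

lemma Pten_fderiv_inl_left (Z : Phase Np) (p : Fin Np × Fin 3) (b : Idx Np) (v : Phase Np) :
    fderiv ℝ (fun z => Pten ω B0 z (.inl p) b) Z v = 0 := by
  have h : (fun z : Phase Np => Pten ω B0 z (.inl p) b)
      = fun _ => Pten ω B0 Z (.inl p) b := by cases b <;> rfl
  rw [h, fderiv_const_apply]
  simp

lemma Pten_fderiv_inl_right (Z : Phase Np) (a : Idx Np) (q : Fin Np × Fin 3) (v : Phase Np) :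
    fderiv ℝ (fun z => Pten ω B0 z a (.inl q)) Z v = 0 := by
  have h : (fun z : Phase Np => Pten ω B0 z a (.inl q))
      = fun _ => Pten ω B0 Z a (.inl q) := by cases a <;> rfl
  rw [h, fderiv_const_apply]
  simp

lemma Pten_fderiv_dirV (hB : ContDiff ℝ 1 B0) (Z : Phase Np) (a b : Idx Np)
    (r : Fin Np × Fin 3) :
    fderiv ℝ (fun z => Pten ω B0 z a b) Z (bas Np (.inr r)) = 0 := by
  rcases a with p | p
  · exact Pten_fderiv_inl_left ω B0 Z p b _
  rcases b with q | q
  · exact Pten_fderiv_inl_right ω B0 Z (.inr p) q _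
  rw [Pten_fderiv_rr ω B0 hB]
  have : (bas Np (.inr r)).1 p.1 = 0 := rfl
  rw [this]
  simp

lemma Pten_cyc (hB : ContDiff ℝ 1 B0) (hdiv : ∀ x, div3 B0 x = 0) (Z : Phase Np)
    (a b d : Idx Np) :
    ∑ c, (Pten ω B0 Z c d * fderiv ℝ (fun z => Pten ω B0 z a b) Z (bas Np c)
      + Pten ω B0 Z c a * fderiv ℝ (fun z => Pten ω B0 z b d) Z (bas Np c)
      + Pten ω B0 Z c b * fderiv ℝ (fun z => Pten ω B0 z d a) Z (bas Np c)) = 0 := by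
  rcases a with pa | pa
  · refine Finset.sum_eq_zero fun c _ => ?_
    rw [Pten_fderiv_inl_left, Pten_fderiv_inl_right]
    rcases c with r | r
    · simp [Pten]
    · rw [Pten_fderiv_dirV ω B0 hB]; ring
  rcases b with pb | pb
  · refine Finset.sum_eq_zero fun c _ => ?_
    rw [Pten_fderiv_inl_left, Pten_fderiv_inl_right]
    rcases c with r | r
    · simp [Pten]
    · rw [Pten_fderiv_dirV ω B0 hB]; ring
  rcases d with pd | pd
  · refine Finset.sum_eq_zero fun c _ => ?_
    rw [Pten_fderiv_inl_left, Pten_fderiv_inl_right]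
    rcases c with r | r
    · simp [Pten]
    · rw [Pten_fderiv_dirV ω B0 hB]; ring
  -- all inr
  rw [Fintype.sum_sum_type]
  have hR : (∑ r : Fin Np × Fin 3,
      (Pten ω B0 Z (.inr r) (.inr pd) * fderiv ℝ (fun z => Pten ω B0 z (.inr pa) (.inr pb)) Z (bas Np (.inr r))
      + Pten ω B0 Z (.inr r) (.inr pa) * fderiv ℝ (fun z => Pten ω B0 z (.inr pb) (.inr pd)) Z (bas Np (.inr r))
      + Pten ω B0 Z (.inr r) (.inr pb) * fderiv ℝ (fun z => Pten ω B0 z (.inr pd) (.inr pa)) Z (bas Np (.inr r)))) = 0 := by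
    refine Finset.sum_eq_zero fun r _ => ?_
    rw [Pten_fderiv_dirV ω B0 hB, Pten_fderiv_dirV ω B0 hB, Pten_fderiv_dirV ω B0 hB]
    ring
  rw [hR, add_zero]
  -- left part: collapse the ite sums
  have collapse : ∀ (pz : Fin Np × Fin 3) (f : Fin Np × Fin 3 → ℝ),
      (∑ r : Fin Np × Fin 3, Pten ω B0 Z (.inl r) (.inr pz) * f r) = (1 / ω pz.1) * f pz := by
    intro pz f
    have : ∀ r : Fin Np × Fin 3, Pten ω B0 Z (.inl r) (.inr pz) * f r
        = if r = pz then (1 / ω r.1) * f r else 0 := by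
      intro r; simp only [Pten]; split <;> simp
    simp only [this, Finset.sum_ite_eq', Finset.mem_univ, if_true]
  simp only [Finset.sum_add_distrib]
  rw [collapse pd, collapse pa, collapse pb]
  rw [Pten_fderiv_rr ω B0 hB, Pten_fderiv_rr ω B0 hB, Pten_fderiv_rr ω B0 hB]
  have hb1 : ∀ (w : Fin Np × Fin 3) (s : Fin Np),
      (bas Np (.inl w)).1 s = if s = w.1 then Pi.single w.2 1 else 0 := by
    intro w s
    show (Pi.single w.1 (Pi.single w.2 (1:ℝ)) : Fin Np → Fin 3 → ℝ) s = _
    rw [Pi.single_apply]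
  rw [hb1, hb1, hb1]
  rcases eq_or_ne pa.1 pb.1 with hab | hab
  · rcases eq_or_ne pb.1 pd.1 with hbd | hbd
    · -- all equal
      rw [if_pos hab, if_pos hbd, if_pos (hbd.symm.trans hab.symm)]
      rw [if_pos (hab.trans hbd), if_pos hab.symm, if_pos hbd.symm]
      have hx2 : Z.1 pb.1 = Z.1 pa.1 := by rw [← hab]
      have hx3 : Z.1 pd.1 = Z.1 pa.1 := by rw [← hbd, ← hab]
      have hω2 : ω pb.1 = ω pa.1 := by rw [← hab]
      have hω3 : ω pd.1 = ω pa.1 := by rw [← hbd, ← hab]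
      rw [hx2, hx3, hω2, hω3]
      have hM : (∑ m, fderiv ℝ (fun y => B0 y m) (Z.1 pa.1) (Pi.single pd.2 1)
            * ((Pi.single pa.2 (1:ℝ)) ⨯₃ (Pi.single pb.2 1)) m)
          + (∑ m, fderiv ℝ (fun y => B0 y m) (Z.1 pa.1) (Pi.single pa.2 1)
            * ((Pi.single pb.2 (1:ℝ)) ⨯₃ (Pi.single pd.2 1)) m)
          + (∑ m, fderiv ℝ (fun y => B0 y m) (Z.1 pa.1) (Pi.single pb.2 1)
            * ((Pi.single pd.2 (1:ℝ)) ⨯₃ (Pi.single pa.2 1)) m) = 0 := by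
        refine eps_identity (fun k m => fderiv ℝ (fun y => B0 y m) (Z.1 pa.1) (Pi.single k 1)) ?_ _ _ _
        have := hdiv (Z.1 pa.1)
        unfold div3 at this
        rw [Fin.sum_univ_three] at this
        linarith
      linear_combination (1 / ω pa.1 * (1 / ω pa.1)) * hM
    · -- pa.1 = pb.1, pb.1 ≠ pd.1
      rw [if_pos hab, if_neg hbd, if_neg (fun h : pd.1 = pa.1 => hbd (hab.symm.trans h.symm)),
        if_neg (fun h : pa.1 = pd.1 => hbd (hab.symm.trans h))]
      simp
  · rcases eq_or_ne pb.1 pd.1 with hbd | hbd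
    · rw [if_neg hab, if_pos hbd, if_neg (fun h : pd.1 = pa.1 => hab (hbd.trans h).symm),
        if_neg (fun h : pb.1 = pa.1 => hab h.symm)]
      simp
    · rw [if_neg hab, if_neg hbd]
      rcases eq_or_ne pd.1 pa.1 with hda | hda
      · rw [if_pos hda, if_neg (fun h : pd.1 = pb.1 => hbd h.symm)]
        simp
      · rw [if_neg hda]
        simp

end CPart

/-- The discrete particle bracket satisfies the Jacobi identity whenever `∇ ⬝ B₀ = 0`. -/
theorem discrete_bracket_jacobi {Np : ℕ} (ω : Fin Np → ℝ) (hω : ∀ s, 0 < ω s)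
    (B0 : (Fin 3 → ℝ) → Fin 3 → ℝ) (hB : ContDiff ℝ 1 B0)
    (hdiv : ∀ x, div3 B0 x = 0)
    (F G H : Phase Np → ℝ) (hF : ContDiff ℝ (⊤ : ℕ∞) F) (hG : ContDiff ℝ (⊤ : ℕ∞) G)
    (hH : ContDiff ℝ (⊤ : ℕ∞) H) (Z : Phase Np) :
    pBracket ω B0 (pBracket ω B0 F G) H Z + pBracket ω B0 (pBracket ω B0 G H) F Z +
      pBracket ω B0 (pBracket ω B0 H F) G Z = 0 := by
  have hbr : ∀ F G : Phase Np → ℝ, pBracket ω B0 F G = br (Pten ω B0) (bas Np) F G := by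
    intro F G
    funext z
    exact (br_eq ω B0 F G z).symm
  rw [hbr F G, hbr G H, hbr H F, hbr, hbr, hbr]
  exact jacobi_general (Pten ω B0) (bas Np) Z (fun a b => Pten_diff ω B0 hB Z a b)
    (fun a b => Pten_anti ω B0 Z a b) (fun a b d => Pten_cyc ω B0 hB hdiv Z a b d)
    F G H hF hG hH

end
end

section
/- Let N, N_p ∈ ℕ, let ω_s > 0 for s = 1,…,N_p, let W_1,…,W_N : ℝ³ → ℝ be continuously differentiable, let M ∈ ℝ^{N×N} be symmetric and invertible, let c ∈ ℝ^N, and let B₀ : ℝ³ → ℝ³ be continuous. Define F : (ℝ³)^{N_p} → ℝ^N by F_i(X) = Σ_{s=1}^{N_p} ω_s W_i(X_s) − c_i, define Φ(X) = M⁻¹ F(X), and define the discrete Hamiltonian H(X,V) = (1/2) Σ_{s=1}^{N_p} ω_s |V_s|² + (1/2) Φ(X)ᵀ M Φ(X). If X_s, V_s : ℝ → ℝ³ are differentiable and satisfy the semi-discrete particle equations X_s'(t) = V_s(t) and V_s'(t) = −Σ_{j=1}^{N} Φ_j(X(t)) ∇W_j(X_s(t)) + V_s(t) × B₀(X_s(t))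 for all s and t, then t ↦ H(X(t), V(t)) is constant. -/
/-!
Differentiate the energy along a trajectory. The magnetic force does no work, since
`V ⬝ᵥ (V ⨯₃ B) = 0`, so the kinetic energy changes at the rate
`-∑ s, ω s * ∑ j, Φ j * (∇W_j(X_s) ⬝ᵥ V_s)`. Since `M` is symmetric and `M Φ = F`, the field
energy `½ Φ ⬝ᵥ M Φ` changes at the rate `Φ ⬝ᵥ F'`, and `F'_j = ∑ s, ω s * (∇W_j(X_s) ⬝ᵥ V_s)`
by the chain rule; the two rates cancel.
-/

open Matrix
open scoped Matrix BigOperators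

noncomputable section

/-- Gradient of a function on ℝ³ (vector of partial derivatives). -/
def grad3 (f : (Fin 3 → ℝ) → ℝ) (x : Fin 3 → ℝ) : Fin 3 → ℝ :=
  fun i => fderiv ℝ f x (Pi.single i 1)

section DotProduct

variable {𝕜 ι κ : Type*} [NontriviallyNormedField 𝕜] [Fintype ι]
  {f g : 𝕜 → ι → 𝕜} {f' g' : ι → 𝕜} {t : 𝕜}

theorem HasDerivAt.dotProduct (hf : HasDerivAt f f' t) (hg : HasDerivAt g g' t) :
    HasDerivAt (fun τ => f τ ⬝ᵥ g τ) (f' ⬝ᵥ g t + f t ⬝ᵥ g') t := by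
  refine (HasDerivAt.fun_sum fun i _ =>
    (hasDerivAt_pi.1 hf i).fun_mul (hasDerivAt_pi.1 hg i)).congr_deriv ?_
  rw [Finset.sum_add_distrib]
  rfl

theorem HasDerivAt.dotProduct_self (hf : HasDerivAt f f' t) :
    HasDerivAt (fun τ => f τ ⬝ᵥ f τ) (2 * (f t ⬝ᵥ f')) t := by
  convert hf.dotProduct hf using 1
  rw [dotProduct_comm f']
  ring

theorem HasDerivAt.mulVec (A : Matrix κ ι 𝕜) (hf : HasDerivAt f f' t) :
    HasDerivAt (fun τ => A *ᵥ f τ) (A *ᵥ f') t :=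
  hasDerivAt_pi.2 fun i =>
    HasDerivAt.fun_sum fun j _ => (hasDerivAt_pi.1 hf j).const_mul (A i j)

theorem HasDerivAt.dotProduct_mulVec_self {A : Matrix ι ι 𝕜} (hA : Aᵀ = A)
    (hf : HasDerivAt f f' t) :
    HasDerivAt (fun τ => f τ ⬝ᵥ A *ᵥ f τ) (2 * (f t ⬝ᵥ A *ᵥ f')) t := by
  convert hf.dotProduct (hf.mulVec A) using 1
  rw [dotProduct_mulVec f', ← hA, vecMul_transpose, hA, dotProduct_comm (A *ᵥ f')]
  ring

end DotProduct

theorem dotProduct_neg_sum_smul_add_cross {R ι : Type*} [CommRing R] [Fintype ι]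
    (v b : Fin 3 → R) (φ : ι → R) (g : ι → Fin 3 → R) :
    v ⬝ᵥ (-(∑ j, φ j • g j) + v ⨯₃ b) = -∑ j, φ j * (g j ⬝ᵥ v) := by
  rw [dotProduct_add, dot_self_cross, add_zero, dotProduct_neg, dotProduct_sum]
  simp only [smul_dotProduct, smul_eq_mul, dotProduct_comm v]

theorem fderiv_apply_eq_grad3_dotProduct (f : (Fin 3 → ℝ) → ℝ) (x v : Fin 3 → ℝ) :
    fderiv ℝ f x v = grad3 f x ⬝ᵥ v := by
  conv_lhs => rw [pi_eq_sum_univ' v]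
  simp only [map_sum, map_smul, smul_eq_mul, dotProduct, grad3, mul_comm]

theorem DifferentiableAt.hasDerivAt_comp_grad3 {f : (Fin 3 → ℝ) → ℝ} {γ : ℝ → Fin 3 → ℝ}
    {γ' : Fin 3 → ℝ} {t : ℝ} (hf : DifferentiableAt ℝ f (γ t)) (hγ : HasDerivAt γ γ' t) :
    HasDerivAt (fun τ => f (γ τ)) (grad3 f (γ t) ⬝ᵥ γ') t := by
  rw [← fderiv_apply_eq_grad3_dotProduct]
  exact hf.hasFDerivAt.comp_hasDerivAt t hγ

theorem sum_mul_sum_mul_eq_dotProduct {R ι σ : Type*} [CommRing R] [Fintype ι] [Fintype σ]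
    (ω : σ → R) (φ : ι → R) (a : ι → σ → R) :
    ∑ s, ω s * ∑ j, φ j * a j s = φ ⬝ᵥ fun j => ∑ s, ω s * a j s := by
  simp only [dotProduct, Finset.mul_sum]
  rw [Finset.sum_comm]
  exact Finset.sum_congr rfl fun _ _ => Finset.sum_congr rfl fun _ _ => by ring

theorem discrete_energy_conserved_general {N Np : ℕ}
    (ω : Fin Np → ℝ)
    (W : Fin N → (Fin 3 → ℝ) → ℝ) (hW : ∀ j, ContDiff ℝ 1 (W j))
    (M : Matrix (Fin N) (Fin N) ℝ) (hMsymm : Mᵀ = M) (hMinv : IsUnit M.det)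
    (c : Fin N → ℝ)
    (B0 : (Fin 3 → ℝ) → Fin 3 → ℝ)
    (F : (Fin Np → Fin 3 → ℝ) → Fin N → ℝ)
    (hF : F = fun X i => (∑ s, ω s * W i (X s)) - c i)
    (Φ : (Fin Np → Fin 3 → ℝ) → Fin N → ℝ)
    (hΦ : Φ = fun X => M⁻¹.mulVec (F X))
    (Ham : (Fin Np → Fin 3 → ℝ) → (Fin Np → Fin 3 → ℝ) → ℝ)
    (hHam : Ham = fun X V =>
      (1 / 2) * ∑ s, ω s * (V s ⬝ᵥ V s) + (1 / 2) * (Φ X ⬝ᵥ M.mulVec (Φ X)))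
    (X V : ℝ → Fin Np → Fin 3 → ℝ)
    (hX : ∀ (s : Fin Np) (t : ℝ), HasDerivAt (fun τ => X τ s) (V t s) t)
    (hV : ∀ (s : Fin Np) (t : ℝ), HasDerivAt (fun τ => V τ s)
      (-(∑ j, Φ (X t) j • grad3 (W j) (X t s)) + (V t s) ⨯₃ B0 (X t s)) t) :
    ∀ t₁ t₂ : ℝ, Ham (X t₁) (V t₁) = Ham (X t₂) (V t₂) := by
  suffices key : ∀ t, HasDerivAt (fun τ => Ham (X τ) (V τ)) 0 t from
    is_const_of_deriv_eq_zero (fun t => (key t).differentiableAt) fun t => (key t).deriv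
  intro t
  subst hHam hΦ
  have hF' : HasDerivAt (fun τ => F (X τ))
      (fun j => ∑ s, ω s * (grad3 (W j) (X t s) ⬝ᵥ V t s)) t := by
    subst hF
    exact hasDerivAt_pi.2 fun j => (HasDerivAt.fun_sum fun s _ =>
      ((((hW j).differentiable one_ne_zero) _).hasDerivAt_comp_grad3 (hX s t)).const_mul
        (ω s)).sub_const (c j)
  have hKin := HasDerivAt.fun_sum (u := Finset.univ) fun s _ =>
    (hV s t).dotProduct_self.const_mul (ω s)
  have hPot := (hF'.mulVec M⁻¹).dotProduct_mulVec_self hMsymm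
  refine ((hKin.const_mul (1 / 2)).add (hPot.const_mul (1 / 2))).congr_deriv ?_
  rw [mulVec_mulVec, mul_nonsing_inv M hMinv, one_mulVec]
  simp only [dotProduct_neg_sum_smul_add_cross, mul_neg, Finset.sum_neg_distrib,
    mul_left_comm (ω _) 2, ← Finset.mul_sum]
  linear_combination -sum_mul_sum_mul_eq_dotProduct ω (M⁻¹ *ᵥ F (X t))
    fun j s => grad3 (W j) (X t s) ⬝ᵥ V t s

/-- The discrete Hamiltonian (energy) is conserved along solutions of the semi-discrete
particle equations of the Vlasov--Poisson system. -/
theorem discrete_energy_conserved {N Np : ℕ}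
    (ω : Fin Np → ℝ) (hω : ∀ s, 0 < ω s)
    (W : Fin N → (Fin 3 → ℝ) → ℝ) (hW : ∀ j, ContDiff ℝ 1 (W j))
    (M : Matrix (Fin N) (Fin N) ℝ) (hMsymm : Mᵀ = M) (hMinv : IsUnit M.det)
    (c : Fin N → ℝ)
    (B0 : (Fin 3 → ℝ) → Fin 3 → ℝ) (hB : Continuous B0)
    (F : (Fin Np → Fin 3 → ℝ) → Fin N → ℝ)
    (hF : F = fun X i => (∑ s, ω s * W i (X s)) - c i)
    (Φ : (Fin Np → Fin 3 → ℝ) → Fin N → ℝ)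
    (hΦ : Φ = fun X => M⁻¹.mulVec (F X))
    (Ham : (Fin Np → Fin 3 → ℝ) → (Fin Np → Fin 3 → ℝ) → ℝ)
    (hHam : Ham = fun X V =>
      (1 / 2) * ∑ s, ω s * (V s ⬝ᵥ V s) + (1 / 2) * (Φ X ⬝ᵥ M.mulVec (Φ X)))
    (X V : ℝ → Fin Np → Fin 3 → ℝ)
    (hX : ∀ (s : Fin Np) (t : ℝ), HasDerivAt (fun τ => X τ s) (V t s) t)
    (hV : ∀ (s : Fin Np) (t : ℝ), HasDerivAt (fun τ => V τ s)
      (-(∑ j, Φ (X t) j • grad3 (W j) (X t s)) + (V t s) ⨯₃ B0 (X t s)) t) :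
    ∀ t₁ t₂ : ℝ, Ham (X t₁) (V t₁) = Ham (X t₂) (V t₂) :=
  discrete_energy_conserved_general ω W hW M hMsymm hMinv c B0 F hF Φ hΦ Ham hHam X V hX hV
end
end

section
/- Let B ∈ ℝ³ with b := |B| > 0 and let B̂ be its hat matrix. Then for every t ∈ ℝ, the matrix exponential satisfies exp(t·B̂) = I + (sin(bt)/b)·B̂ + ((1 − cos(bt))/b²)·B̂². -/
open Matrix
open scoped Matrix BigOperators

noncomputable section

/-- The hat matrix of a vector `B ∈ ℝ³`, satisfying `B̂ v = v × B`. -/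
def hatMatrix (B : Fin 3 → ℝ) : Matrix (Fin 3) (Fin 3) ℝ :=
  !![0, B 2, -(B 1); -(B 2), 0, B 0; B 1, -(B 0), 0]

/-- The Euclidean norm of a vector in ℝ³. -/
def enorm3 (B : Fin 3 → ℝ) : ℝ := Real.sqrt (∑ i, B i ^ 2)

/-!
The hat matrix satisfies `B̂³ = -b² B̂`. For any `A` with `A³ = -b² A`, `b ≠ 0`, this gives
`A^(2k+1) = (-b²)^k A` and `A^(2k+2) = (-b²)^k A²`, so after its constant term the exponential
series of `t A` splits into its odd part, `A` times the sine series of `bt` divided by `b`, and its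
even part, `A²` times the series of `1 - cos (bt)` divided by `b²`.
-/

open Nat

section PowThree

variable {R 𝔸 : Type*} [CommSemiring R] [Semiring 𝔸] [Algebra R 𝔸] {A : 𝔸} {c : R}

theorem pow_two_mul_add_one_of_pow_three_eq (hA : A ^ 3 = c • A) (k : ℕ) :
    A ^ (2 * k + 1) = c ^ k • A := by
  induction k with
  | zero => simp
  | succ k ih =>
    calc A ^ (2 * (k + 1) + 1) = A ^ (2 * k + 1) * A ^ 2 := by rw [← pow_add]; ring_nf
      _ = c ^ k • A ^ 3 := by rw [ih, smul_mul_assoc, (pow_succ' A 2).symm]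
      _ = c ^ (k + 1) • A := by rw [hA, smul_smul, ← pow_succ]

theorem pow_two_mul_add_two_of_pow_three_eq (hA : A ^ 3 = c • A) (k : ℕ) :
    A ^ (2 * k + 2) = c ^ k • A ^ 2 := by
  rw [pow_succ, pow_two_mul_add_one_of_pow_three_eq hA, smul_mul_assoc, ← sq]

end PowThree

theorem Real.hasSum_one_sub_cos (x : ℝ) :
    HasSum (fun k : ℕ => (-1) ^ k * x ^ (2 * k + 2) / (2 * k + 2)!) (1 - Real.cos x) := by
  have h := ((hasSum_nat_add_iff' 1).mpr (Real.hasSum_cos x)).neg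
  have hterm : (fun k : ℕ => -((-1) ^ (k + 1) * x ^ (2 * (k + 1)) / (2 * (k + 1))!)) =
      fun k : ℕ => (-1) ^ k * x ^ (2 * k + 2) / (2 * k + 2)! := by
    ext k
    rw [pow_succ, mul_add]
    ring
  simpa [hterm] using h

section Exp

variable {𝔸 : Type*} [Ring 𝔸] [Algebra ℝ 𝔸] [TopologicalSpace 𝔸] [IsTopologicalRing 𝔸]
  [ContinuousSMul ℝ 𝔸] [T2Space 𝔸]

theorem exp_smul_of_pow_three_eq {A : 𝔸} {b : ℝ} (hb : b ≠ 0) (hA : A ^ 3 = (-b ^ 2) • A)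
    (t : ℝ) :
    NormedSpace.exp (t • A) =
      1 + (Real.sin (b * t) / b) • A + ((1 - Real.cos (b * t)) / b ^ 2) • A ^ 2 := by
  have hodd : HasSum (fun k : ℕ => (t ^ (2 * k + 1) / (2 * k + 1)!) • A ^ (2 * k + 1))
      ((Real.sin (b * t) / b) • A) := by
    have hterm (k : ℕ) : (t ^ (2 * k + 1) / (2 * k + 1)!) • A ^ (2 * k + 1) =
        ((-1) ^ k * (b * t) ^ (2 * k + 1) / (2 * k + 1)! / b) • A := by
      rw [pow_two_mul_add_one_of_pow_three_eq hA, smul_smul, neg_pow, ← pow_mul, mul_pow,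
        pow_succ b]
      congr 1
      field_simp
    simpa only [hterm] using ((Real.hasSum_sin (b * t)).div_const b).smul_const A
  have heven : HasSum (fun k : ℕ => (t ^ (2 * k + 2) / (2 * k + 2)!) • A ^ (2 * k + 2))
      (((1 - Real.cos (b * t)) / b ^ 2) • A ^ 2) := by
    have hterm (k : ℕ) : (t ^ (2 * k + 2) / (2 * k + 2)!) • A ^ (2 * k + 2) =
        ((-1) ^ k * (b * t) ^ (2 * k + 2) / (2 * k + 2)! / b ^ 2) • A ^ 2 := by
      rw [pow_two_mul_add_two_of_pow_three_eq hA, smul_smul, neg_pow, ← pow_mul, mul_pow,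
        pow_add b]
      congr 1
      field_simp
    simpa only [hterm] using
      ((Real.hasSum_one_sub_cos (b * t)).div_const (b ^ 2)).smul_const (A ^ 2)
  have htail : HasSum (fun n : ℕ => (t ^ (n + 1) / (n + 1)!) • A ^ (n + 1))
      ((Real.sin (b * t) / b) • A + ((1 - Real.cos (b * t)) / b ^ 2) • A ^ 2) :=
    hodd.even_add_odd heven
  rw [NormedSpace.exp_eq_tsum ℝ]
  refine HasSum.tsum_eq ?_
  simp_rw [smul_pow, smul_smul, inv_mul_eq_div]
  simpa [add_assoc] using HasSum.zero_add (f := fun n : ℕ => (t ^ n / n !) • A ^ n) htail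

end Exp

theorem hatMatrix_pow_three (B : Fin 3 → ℝ) :
    hatMatrix B ^ 3 = (-enorm3 B ^ 2) • hatMatrix B := by
  rw [enorm3, Real.sq_sqrt (by positivity), pow_succ, sq]
  ext i j
  fin_cases i <;> fin_cases j <;>
    simp [hatMatrix, Matrix.mul_apply, Fin.sum_univ_succ] <;> ring

/-- Rodrigues-type formula for the matrix exponential of `t • B̂`. -/
theorem exp_hatMatrix (B : Fin 3 → ℝ) (hb : 0 < enorm3 B) (t : ℝ) :
    NormedSpace.exp (t • hatMatrix B) =
      1 + (Real.sin (enorm3 B * t) / enorm3 B) • hatMatrix B +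
        ((1 - Real.cos (enorm3 B * t)) / (enorm3 B) ^ 2) • (hatMatrix B * hatMatrix B) := by
  rw [← sq]
  exact exp_smul_of_pow_three_eq hb.ne' (hatMatrix_pow_three B) t

end
end

section
/- Let N_p ∈ ℕ, let ω_s > 0 for s = 1,…,N_p, let B₀ : ℝ³ → ℝ³ be continuous, let g : (ℝ³)^{N_p} → ℝ be twice continuously differentiable, and let Δt ∈ ℝ. Define the kick map ψ : (ℝ³)^{N_p} × (ℝ³)^{N_p} → (ℝ³)^{N_p} × (ℝ³)^{N_p} by ψ(X,V) = (X, V') with V'_s = V_s − Δt (1/ω_s) ∂g/∂X_s(X) for each s. Then ψ preserves the discrete particle bracket: for all continuously differentiable F, G : (ℝ³)^{N_p} × (ℝ³)^{N_p} → ℝ and all (X,V), {F∘ψ, G∘ψ}(X,V) = {F,G}(ψ(X,V)). -/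
/-!
The kick is a shear `(X, V) ↦ (X, V - K X)` with `K = Δt W ∇g`, `W = diag (1 / ω s)`. Composing
with it leaves the velocity gradients unchanged, so the magnetic term of the bracket is untouched,
while the position derivative of `F ∘ ψ` in a direction `u` loses `Δt D²g(u, W ∂_V F)`. In the
canonical term the two corrections are `Δt D²g(W ∂_V G, W ∂_V F)` and `Δt D²g(W ∂_V F, W ∂_V G)`,
which cancel because the Hessian of a `C²` function is symmetric.
-/

open Matrix
open scoped Matrix BigOperators

noncomputable section

/-- Gradient of a function of all particle positions with respect to the position `X s`. -/
def gradXs {Np : ℕ} (g : (Fin Np → Fin 3 → ℝ) → ℝ) (X : Fin Np → Fin 3 → ℝ)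
    (s : Fin Np) : Fin 3 → ℝ :=
  fun i => fderiv ℝ g X (Pi.single s (Pi.single i 1))

theorem map_eq_sum_sum_smul_single {ι κ R M 𝓕 : Type*} [Fintype ι] [Fintype κ] [DecidableEq ι]
    [DecidableEq κ] [Semiring R] [AddCommMonoid M] [Module R M] [FunLike 𝓕 (ι → κ → R) M]
    [LinearMapClass 𝓕 R (ι → κ → R) M] (φ : 𝓕) (u : ι → κ → R) :
    φ u = ∑ s, ∑ i, u s i • φ (Pi.single s (Pi.single i 1)) := by
  have hu : u = ∑ s, ∑ i, u s i • Pi.single s (Pi.single i (1 : R)) := by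
    ext s i
    simp [Finset.sum_apply, Pi.single_apply, ite_apply]
  conv_lhs => rw [hu]
  simp only [map_sum, map_smul]

section Shear

variable {𝕜 E E' G : Type*} [NontriviallyNormedField 𝕜] [NormedAddCommGroup E] [NormedSpace 𝕜 E]
  [NormedAddCommGroup E'] [NormedSpace 𝕜 E'] [NormedAddCommGroup G] [NormedSpace 𝕜 G]

theorem fderiv_comp_shear_apply {K : E → E'} {K' : E →L[𝕜] E'} {z : E × E'}
    (hK : HasFDerivAt K K' z.1) {F : E × E' → G} (hF : DifferentiableAt 𝕜 F (z.1, z.2 - K z.1))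
    (u : E) (v : E') :
    fderiv 𝕜 (F ∘ fun z : E × E' => (z.1, z.2 - K z.1)) z (u, v) =
      fderiv 𝕜 F (z.1, z.2 - K z.1) (u, v - K' u) := by
  have hshear : HasFDerivAt (fun z : E × E' => (z.1, z.2 - K z.1))
      ((ContinuousLinearMap.fst 𝕜 E E').prod
        (ContinuousLinearMap.snd 𝕜 E E' - K'.comp (ContinuousLinearMap.fst 𝕜 E E'))) z :=
    hasFDerivAt_fst.prodMk (hasFDerivAt_snd.sub (hK.comp z hasFDerivAt_fst))
  rw [(hF.hasFDerivAt.comp z hshear).fderiv]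
  rfl

end Shear

section Kick

variable {Np : ℕ}

theorem fderiv_inl_eq_sum_gradX (F : Phase Np → ℝ) (Z : Phase Np) (u : Fin Np → Fin 3 → ℝ) :
    fderiv ℝ F Z (u, 0) = ∑ s, gradX F Z s ⬝ᵥ u s := by
  have := map_eq_sum_sum_smul_single ((fderiv ℝ F Z).comp (ContinuousLinearMap.inl ℝ _ _)) u
  simpa [dotProduct, mul_comm, gradX] using this

theorem fderiv_inr_eq_sum_gradV (F : Phase Np → ℝ) (Z : Phase Np) (v : Fin Np → Fin 3 → ℝ) :
    fderiv ℝ F Z (0, v) = ∑ s, gradV F Z s ⬝ᵥ v s := by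
  have := map_eq_sum_sum_smul_single ((fderiv ℝ F Z).comp (ContinuousLinearMap.inr ℝ _ _)) v
  simpa [dotProduct, mul_comm, gradV] using this

theorem pBracket_eq_fderiv (ω : Fin Np → ℝ) (B0 : (Fin 3 → ℝ) → Fin 3 → ℝ)
    (F G : Phase Np → ℝ) (Z : Phase Np) :
    pBracket ω B0 F G Z =
      fderiv ℝ F Z (fun s => (1 / ω s) • gradV G Z s, 0) -
        fderiv ℝ G Z (fun s => (1 / ω s) • gradV F Z s, 0) +
      ∑ s, (1 / ω s) * (B0 (Z.1 s) ⬝ᵥ (gradV F Z s ⨯₃ gradV G Z s)) := by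
  simp only [pBracket, fderiv_inl_eq_sum_gradX, dotProduct_smul, smul_eq_mul, mul_sub,
    Finset.sum_sub_distrib]

def weightedGrad (c : Fin Np → ℝ) :
    ((Fin Np → Fin 3 → ℝ) →L[ℝ] ℝ) →L[ℝ] Fin Np → Fin 3 → ℝ :=
  ContinuousLinearMap.pi fun s => ContinuousLinearMap.pi fun i =>
    c s • ContinuousLinearMap.apply ℝ ℝ (Pi.single s (Pi.single i 1))

-- Definitionally the map `ψ` of the theorem, written as a shear by a function of `X`.
def kick (ω : Fin Np → ℝ) (Δt : ℝ) (g : (Fin Np → Fin 3 → ℝ) → ℝ) (Z : Phase Np) : Phase Np :=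
  (Z.1, Z.2 - weightedGrad (fun s => Δt * (1 / ω s)) (fderiv ℝ g Z.1))

@[simp]
theorem weightedGrad_apply (c : Fin Np → ℝ) (L : (Fin Np → Fin 3 → ℝ) →L[ℝ] ℝ)
    (s : Fin Np) (i : Fin 3) :
    weightedGrad c L s i = c s * L (Pi.single s (Pi.single i 1)) := rfl

theorem sum_dotProduct_weightedGrad (c : Fin Np → ℝ) (L : (Fin Np → Fin 3 → ℝ) →L[ℝ] ℝ)
    (v : Fin Np → Fin 3 → ℝ) :
    ∑ s, v s ⬝ᵥ weightedGrad c L s = L (fun s => c s • v s) := by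
  rw [map_eq_sum_sum_smul_single L]
  simp only [dotProduct, weightedGrad_apply, Pi.smul_apply, smul_eq_mul, mul_assoc,
    mul_left_comm]

variable (ω : Fin Np → ℝ) (Δt : ℝ) {g : (Fin Np → Fin 3 → ℝ) → ℝ}

theorem fderiv_comp_kick_apply (hg : ContDiff ℝ 2 g) {F : Phase Np → ℝ} {Z : Phase Np}
    (hF : DifferentiableAt ℝ F (kick ω Δt g Z)) (u v : Fin Np → Fin 3 → ℝ) :
    fderiv ℝ (F ∘ kick ω Δt g) Z (u, v) = fderiv ℝ F (kick ω Δt g Z)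
      (u, v - weightedGrad (fun s => Δt * (1 / ω s)) (fderiv ℝ (fderiv ℝ g) Z.1 u)) := by
  have hg' : HasFDerivAt (fderiv ℝ g) (fderiv ℝ (fderiv ℝ g) Z.1) Z.1 :=
    ((hg.fderiv_right one_add_one_eq_two.le).differentiable one_ne_zero Z.1).hasFDerivAt
  exact fderiv_comp_shear_apply ((weightedGrad _).hasFDerivAt.comp Z.1 hg') hF u v

theorem gradV_comp_kick (hg : ContDiff ℝ 2 g) {F : Phase Np → ℝ} {Z : Phase Np}
    (hF : DifferentiableAt ℝ F (kick ω Δt g Z)) :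
    gradV (F ∘ kick ω Δt g) Z = gradV F (kick ω Δt g Z) := by
  ext s i
  simp only [gradV, fderiv_comp_kick_apply ω Δt hg hF, map_zero, sub_zero]

theorem fderiv_comp_kick_inl (hg : ContDiff ℝ 2 g) {F : Phase Np → ℝ} {Z : Phase Np}
    (hF : DifferentiableAt ℝ F (kick ω Δt g Z)) (u : Fin Np → Fin 3 → ℝ) :
    fderiv ℝ (F ∘ kick ω Δt g) Z (u, 0) = fderiv ℝ F (kick ω Δt g Z) (u, 0) -
      Δt * fderiv ℝ (fderiv ℝ g) Z.1 u (fun s => (1 / ω s) • gradV F (kick ω Δt g Z) s) := by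
  have hsplit (w : Fin Np → Fin 3 → ℝ) : ((u, 0 - w) : Phase Np) = (u, 0) - (0, w) := by simp
  rw [fderiv_comp_kick_apply ω Δt hg hF, hsplit, map_sub, fderiv_inr_eq_sum_gradV,
    sum_dotProduct_weightedGrad]
  simp only [mul_smul]
  rw [← Pi.smul_def, map_smul, smul_eq_mul]

end Kick

theorem kick_map_preserves_bracket_general {Np : ℕ}
    (ω : Fin Np → ℝ)
    (B0 : (Fin 3 → ℝ) → Fin 3 → ℝ)
    (g : (Fin Np → Fin 3 → ℝ) → ℝ) (hg : ContDiff ℝ 2 g) (Δt : ℝ)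
    (ψ : Phase Np → Phase Np)
    (hψ : ψ = fun Z => (Z.1, fun s => Z.2 s - (Δt * (1 / ω s)) • gradXs g Z.1 s))
    (F G : Phase Np → ℝ) (hF : ContDiff ℝ 1 F) (hG : ContDiff ℝ 1 G) (Z : Phase Np) :
    pBracket ω B0 (F ∘ ψ) (G ∘ ψ) Z = pBracket ω B0 F G (ψ Z) := by
  obtain rfl : ψ = kick ω Δt g := hψ
  have hF' := hF.differentiable one_ne_zero (kick ω Δt g Z)
  have hG' := hG.differentiable one_ne_zero (kick ω Δt g Z)
  have hsymm : IsSymmSndFDerivAt ℝ g Z.1 :=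
    hg.contDiffAt.isSymmSndFDerivAt (by simp)
  rw [pBracket_eq_fderiv, pBracket_eq_fderiv, gradV_comp_kick ω Δt hg hF',
    gradV_comp_kick ω Δt hg hG', fderiv_comp_kick_inl ω Δt hg hF',
    fderiv_comp_kick_inl ω Δt hg hG', hsymm]
  simp only [kick]
  ring

/-- The kick map leaving positions fixed preserves the discrete particle bracket. -/
theorem kick_map_preserves_bracket {Np : ℕ}
    (ω : Fin Np → ℝ) (hω : ∀ s, 0 < ω s)
    (B0 : (Fin 3 → ℝ) → Fin 3 → ℝ) (hB : Continuous B0)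
    (g : (Fin Np → Fin 3 → ℝ) → ℝ) (hg : ContDiff ℝ 2 g) (Δt : ℝ)
    (ψ : Phase Np → Phase Np)
    (hψ : ψ = fun Z => (Z.1, fun s => Z.2 s - (Δt * (1 / ω s)) • gradXs g Z.1 s))
    (F G : Phase Np → ℝ) (hF : ContDiff ℝ 1 F) (hG : ContDiff ℝ 1 G) (Z : Phase Np) :
    pBracket ω B0 (F ∘ ψ) (G ∘ ψ) Z = pBracket ω B0 F G (ψ Z) :=
  kick_map_preserves_bracket_general ω B0 g hg Δt ψ hψ F G hF hG Z

end
end
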